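/- Suppose there exists a ∈ F_q such that N := |{(x,y) ∈ F_q × F_q : y^p − y = x(R(x) + a x)}| satisfies (N − q)² = (p−1)²·p^{2e}·q (i.e. the curve y^p − y = x(R(x)+ax) is F_q-extremal). Then every u ∈ 𝔽 with R(u) + R*(u) = 0 lies in F_q. -/

import Mathlib

open Finset

open scoped Classical

noncomputable section

/-- Length-two Witt vectors, with the operations specialised to characteristic two. -/
def W2 (R : Type*) := R × R

namespace W2

variable {R : Type*} [CommRing R]

instance : Zero (W2 R) := ⟨((0, 0) : R × R)⟩

instance : Add (W2 R) := ⟨fun x y => ((x.1 + y.1, x.2 + y.2 + x.1 * y.1) : R × R)⟩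

instance [CharP R 2] : Neg (W2 R) := ⟨fun x => ((x.1, x.2 + x.1 * x.1) : R × R)⟩

theorem fst_add (x y : W2 R) : (x + y).1 = x.1 + y.1 := rfl
theorem snd_add (x y : W2 R) : (x + y).2 = x.2 + y.2 + x.1 * y.1 := rfl
theorem fst_zero : (0 : W2 R).1 = 0 := rfl
theorem snd_zero : (0 : W2 R).2 = 0 := rfl
theorem fst_neg [CharP R 2] (x : W2 R) : (-x).1 = x.1 := rfl
theorem snd_neg [CharP R 2] (x : W2 R) : (-x).2 = x.2 + x.1 * x.1 := rfl

instance [CharP R 2] : AddCommGroup (W2 R) where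
  add := (· + ·)
  zero := 0
  neg := Neg.neg
  add_assoc a b c := Prod.ext_iff.mpr (by
    constructor <;> simp only [fst_add, snd_add] <;> ring)
  zero_add a := Prod.ext_iff.mpr (by
    constructor <;> simp [fst_add, snd_add, fst_zero, snd_zero])
  add_zero a := Prod.ext_iff.mpr (by
    constructor <;> simp [fst_add, snd_add, fst_zero, snd_zero])
  add_comm a b := Prod.ext_iff.mpr (by
    constructor <;> simp only [fst_add, snd_add] <;> ring)
  neg_add_cancel a := Prod.ext_iff.mpr (by
    constructor
    · simp only [fst_add, fst_neg, fst_zero]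
      exact CharTwo.add_self_eq_zero a.1
    · simp only [snd_add, snd_neg, snd_zero, fst_neg]
      rw [show a.2 + a.1 * a.1 + a.2 + a.1 * a.1
            = (a.2 + a.2) + (a.1 * a.1 + a.1 * a.1) by ring]
      rw [CharTwo.add_self_eq_zero, CharTwo.add_self_eq_zero, add_zero])
  nsmul := nsmulRec
  zsmul := zsmulRec

/-- Frobenius on length-two Witt vectors (characteristic two). -/
def frob (x : W2 R) : W2 R := ((x.1 ^ 2, x.2 ^ 2) : R × R)

/-- The Witt-vector trace `Tr_{q/2} = ∑_{i=0}^{n-1} Frobⁱ`. -/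
def tr [CharP R 2] (n : ℕ) (x : W2 R) : W2 R := ∑ i ∈ Finset.range n, frob^[i] x

/-- The additive character of `W₂(𝔽₂)` determined by `ξ₂(1,0) = I`
(for `I` a fixed primitive fourth root of unity), evaluated on Witt vectors
whose components lie in the prime field `𝔽₂ = {0,1}`. -/
def xi (I : ℂ) (x : W2 R) : ℂ := (if x.1 = 0 then 1 else I) * (if x.2 = 0 then 1 else -1)

end W2

variable {K : Type*}

/-- The absolute trace `Tr_{q/2} : 𝔽_q → 𝔽₂`, computed inside `K` (here `q = 2^n`). -/
def tr2 [Field K] (n : ℕ) (x : K) : K := ∑ i ∈ Finset.range n, x ^ 2 ^ i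

/-- The relative trace `Tr_{q/p} : 𝔽_q → 𝔽_p ⊆ 𝔽_q`, computed inside `K`
(here `q = p^m`). -/
def trp [Field K] (p m : ℕ) (x : K) : K := ∑ i ∈ Finset.range m, x ^ p ^ i

/-- The character `ψ_q(x) = (-1)^{Tr_{q/2}(x)}`. -/
def psiq [Field K] (n : ℕ) (x : K) : ℂ := if tr2 n x = 0 then 1 else -1

/-- The map `Q_q(x) = ξ₂(Tr_{q/2}(x,0))` on Witt vectors of length two. -/
def Qq [Field K] [CharP K 2] (I : ℂ) (n : ℕ) (x : K) : ℂ :=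
  W2.xi I (W2.tr n (((x, 0) : K × K) : W2 K))

/-- The unique `2^j`-th root in a perfect field of characteristic two. -/
def rt (L : Type*) [Field L] [ExpChar L 2] [PerfectRing L 2] (j : ℕ) (x : L) : L :=
  (fun y => (frobeniusEquiv L 2).symm y)^[j] x

/-- Evaluation of the `𝔽_p`-linearised polynomial `∑_{i=0}^{e} c_i x^{p^i}`. -/
def Lpoly [Field K] (p e : ℕ) (c : ℕ → K) (x : K) : K :=
  ∑ i ∈ Finset.range (e + 1), c i * x ^ p ^ i

/-- The adjoint `f^*(x) = ∑_{i=0}^{e} (c_i x)^{p^{-i}}` (with `p = 2^k`). -/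
def adj [Field K] [ExpChar K 2] [PerfectRing K 2] (k e : ℕ) (c : ℕ → K) (x : K) : K :=
  ∑ i ∈ Finset.range (e + 1), rt K (k * i) (c i * x)

/-- Evaluation of the `𝔽_p`-linearised polynomial `∑_{i=1}^{e} c_i x^{p^i}`
(no constant-in-`x` coefficient). -/
def LpolyIcc [Field K] (p e : ℕ) (c : ℕ → K) (x : K) : K :=
  ∑ i ∈ Finset.Icc 1 e, c i * x ^ p ^ i

/-- The adjoint `R^*(x) = ∑_{i=1}^{e} (c_i x)^{p^{-i}}` (with `p = 2^k`). -/
def adjIcc [Field K] [ExpChar K 2] [PerfectRing K 2] (k e : ℕ) (c : ℕ → K) (x : K) : K :=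
  ∑ i ∈ Finset.Icc 1 e, rt K (k * i) (c i * x)

/-- The coefficients `a_i = ∑_{j=0}^{e-i} (b_j b_{j+i})^{p^{-j}}` of `R_F` (with `p = 2^k`). -/
def aRF [Field K] [ExpChar K 2] [PerfectRing K 2] (k e : ℕ) (b : ℕ → K) (i : ℕ) : K :=
  ∑ j ∈ Finset.range (e - i + 1), rt K (k * j) (b j * b (j + i))

/-- The linearised polynomial `R_F(x) = ∑_{i=1}^{e} a_i x^{p^i}` (with `p = 2^k`). -/
def RF [Field K] [ExpChar K 2] [PerfectRing K 2] (k e : ℕ) (b : ℕ → K) (x : K) : K :=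
  ∑ i ∈ Finset.Icc 1 e, aRF k e b i * x ^ (2 ^ k) ^ i

/-- `γ_F = ∑_{0 ≤ i < j ≤ e} b_i^{p^{-i}} b_j^{p^{-j}}` (with `p = 2^k`). -/
def gammaF [Field K] [ExpChar K 2] [PerfectRing K 2] (k e : ℕ) (b : ℕ → K) : K :=
  ∑ i ∈ Finset.range (e + 1), ∑ j ∈ Finset.Ioo i (e + 1), rt K (k * i) (b i) * rt K (k * j) (b j)

/-- `α_F(t) = γ_F + F^*(t)²`. -/
def alphaF [Field K] [ExpChar K 2] [PerfectRing K 2] (k e : ℕ) (b : ℕ → K) (t : K) : K :=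
  gammaF k e b + adj k e b t ^ 2

/-- `R_{F,t}(x) = R_F(x) + α_F(t) x`. -/
def RFt [Field K] [ExpChar K 2] [PerfectRing K 2] (k e : ℕ) (b : ℕ → K) (t x : K) : K :=
  RF k e b x + alphaF k e b t * x

/-- The number of affine points of the van der Geer–van der Vlugt curve
`y^p - y = x R(x)` with coordinates in `K`. -/
def Ncount (K : Type*) [Field K] (p : ℕ) (R : K → K) : ℕ :=
  Nat.card {z : K × K // z.2 ^ p - z.2 = z.1 * R z.1}

/-- The adjoint `F^*` of `F(x) = ∑_{i=0}^{e} b_i x^{p^i}`, with coefficients `b_i ∈ K`,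
viewed as a function on the algebraic closure `𝔽` of `K`. -/
def adjBar [Field K] [CharP K 2] (k e : ℕ) (b : ℕ → K) (x : AlgebraicClosure K) : AlgebraicClosure K :=
  adj k e (fun i => algebraMap K (AlgebraicClosure K) (b i)) x

/-- `F(x) = ∑_{i=0}^{e} b_i x^{p^i}`, with coefficients `b_i ∈ K`, viewed as a function on
the algebraic closure `𝔽` of `K` (with `p = 2^k`). -/
def LpolyBar [Field K] [CharP K 2] (k e : ℕ) (b : ℕ → K) (x : AlgebraicClosure K) : AlgebraicClosure K :=
  Lpoly (2 ^ k) e (fun i => algebraMap K (AlgebraicClosure K) (b i)) x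

/-!
Let `ψ` be the canonical additive character of `𝔽_q` and `S(t) = ∑ₓ ψ(t x (R(x) + a x))`.
Orthogonality gives `N - q = ∑_{t ∈ 𝔽_p^×} S(t)`. Squaring `S(t)` and substituting `x ↦ x + h`
leaves a character sum that is linear in `x`, because `ψ(h R(x)) = ψ(x R^*(h))` by Frobenius
invariance of `ψ`; it vanishes unless `h ∈ V(𝔽_q)`, where `V = ker(R + R^*)`, so
`S(t)² ≤ q · #V(𝔽_q)`. By Cauchy–Schwarz, extremality then forces `#V(𝔽_q) ≥ p^(2e)`. But `V` is
the zero set of `(R + R^*)^(p^e)`, a polynomial of degree `p^(2e)`, so `V ⊆ 𝔽_q`.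
-/

section PerfectRoot

variable {L : Type*} [Field L] [ExpChar L 2] [PerfectRing L 2]

theorem rt_pow (j : ℕ) (x : L) : rt L j x ^ 2 ^ j = x :=
  iterate_frobeniusEquiv_symm_pow_p_pow L 2 x j

theorem rt_eq_of_pow_eq (j : ℕ) {x y : L} (h : y ^ 2 ^ j = x) : rt L j x = y :=
  (iterateFrobeniusEquiv L 2 j).injective <| by simp only [iterateFrobeniusEquiv_def, rt_pow, h]

theorem rt_mul (j : ℕ) (x y : L) : rt L j (x * y) = rt L j x * rt L j y :=
  rt_eq_of_pow_eq j (by rw [mul_pow, rt_pow, rt_pow])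

theorem rt_mul_pow (j : ℕ) (x y : L) : rt L j (x * y ^ 2 ^ j) = rt L j x * y :=
  rt_eq_of_pow_eq j (by rw [mul_pow, rt_pow])

theorem map_rt {L' : Type*} [Field L'] [ExpChar L' 2] [PerfectRing L' 2] (φ : L →+* L')
    (j : ℕ) (x : L) : φ (rt L j x) = rt L' j (φ x) :=
  (rt_eq_of_pow_eq j (by rw [← map_pow, rt_pow])).symm

theorem rt_eq_self_iff (k : ℕ) (t : L) : rt L k t = t ↔ t ^ 2 ^ k = t :=
  ⟨fun h => by rw [← h, rt_pow, h], rt_eq_of_pow_eq k⟩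

theorem rt_mul_eq_self_of_pow_eq (k i : ℕ) {t : L} (ht : t ^ 2 ^ k = t) : rt L (k * i) t = t :=
  rt_eq_of_pow_eq _ <| by
    induction i with
    | zero => simp
    | succ i ih => rw [Nat.mul_succ, pow_add, pow_mul, ih, ht]

end PerfectRoot

theorem AddChar.map_sum_eq_prod {A M ι : Type*} [AddCommMonoid A] [CommMonoid M]
    (ψ : AddChar A M) (s : Finset ι) (f : ι → A) :
    ψ (∑ i ∈ s, f i) = ∏ i ∈ s, ψ (f i) := by
  induction s using Finset.cons_induction with
  | empty => simp
  | cons i s hi ih => rw [sum_cons, prod_cons, AddChar.map_add_eq_mul, ih]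

open Polynomial in
theorem Polynomial.mem_of_isRoot_of_natDegree_le_card {L : Type*} [Field L] {P : L[X]}
    (hP : P ≠ 0) {s : Finset L} (hs : ∀ x ∈ s, P.IsRoot x) (hcard : P.natDegree ≤ #s) {u : L}
    (hu : P.IsRoot u) : u ∈ s := by
  have hsub : s ⊆ P.roots.toFinset := fun x hx =>
    Multiset.mem_toFinset.2 ((mem_roots hP).2 (hs x hx))
  have heq : s = P.roots.toFinset := eq_of_subset_of_card_le hsub <|
    (Multiset.toFinset_card_le _).trans ((card_roots' P).trans hcard)
  exact heq ▸ Multiset.mem_toFinset.2 ((mem_roots hP).2 hu)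

theorem card_filter_pow_eq_self_le {F : Type*} [Field F] [Fintype F] {p : ℕ} (hp : 1 < p) :
    #(univ.filter fun t : F => t ^ p = t) ≤ p := by
  refine (Polynomial.card_le_degree_of_subset_roots fun t ht => ?_).trans_eq
    (FiniteField.X_pow_card_sub_X_natDegree_eq F hp)
  rw [Polynomial.mem_roots (FiniteField.X_pow_card_sub_X_ne_zero F hp)]
  simpa [sub_eq_zero] using ht

section LinearisedPolynomial

open Polynomial

variable {L : Type*} [Field L] (k e : ℕ) (c : ℕ → L)

theorem map_LpolyIcc {L' : Type*} [Field L'] (φ : L →+* L') (x : L) :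
    φ (LpolyIcc (2 ^ k) e c x) = LpolyIcc (2 ^ k) e (fun i => φ (c i)) (φ x) := by
  simp [LpolyIcc]

/-- `R + R^*` involves `p^i`-th roots; its `p^e`-th power is a genuine polynomial,
of degree `p^(2e)` (here `p = 2 ^ k`). -/
def lpolyAddAdjPowPoly : L[X] :=
  ∑ i ∈ Icc 1 e, (C (c i ^ 2 ^ (k * e)) * X ^ 2 ^ (k * (e + i))
    + C (c i ^ 2 ^ (k * (e - i))) * X ^ 2 ^ (k * (e - i)))

theorem natDegree_lpolyAddAdjPowPoly_le :
    (lpolyAddAdjPowPoly k e c).natDegree ≤ 2 ^ (k * (2 * e)) := by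
  refine natDegree_sum_le_of_forall_le _ _ fun i hi => ?_
  have hi := (mem_Icc.1 hi).2
  refine (natDegree_add_le _ _).trans (max_le ?_ ?_) <;>
    refine (natDegree_C_mul_le _ _).trans ?_ <;>
      rw [natDegree_X_pow] <;>
        exact Nat.pow_le_pow_right two_pos (Nat.mul_le_mul_left k (by omega))

theorem coeff_lpolyAddAdjPowPoly (hk : 1 ≤ k) (he : 1 ≤ e) :
    (lpolyAddAdjPowPoly k e c).coeff (2 ^ (k * (2 * e))) = c e ^ 2 ^ (k * e) := by
  have hexp : ∀ j, 2 ^ (k * (2 * e)) = 2 ^ (k * j) ↔ j = 2 * e := fun j => by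
    rw [Nat.pow_right_inj (by norm_num), Nat.mul_right_inj (by omega), eq_comm]
  simp only [lpolyAddAdjPowPoly, finsetSum_coeff, coeff_add, coeff_C_mul, coeff_X_pow, hexp]
  rw [sum_eq_single_of_mem e (mem_Icc.2 ⟨he, le_rfl⟩)]
  · simp [two_mul, show 0 ≠ e + e by omega]
  · intro i hi hie
    have := mem_Icc.1 hi
    simp [if_neg (show e + i ≠ 2 * e by omega), if_neg (show e - i ≠ 2 * e by omega)]

variable [CharP L 2]

theorem LpolyIcc_add (x y : L) :
    LpolyIcc (2 ^ k) e c (x + y) = LpolyIcc (2 ^ k) e c x + LpolyIcc (2 ^ k) e c y := by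
  simp only [LpolyIcc, ← sum_add_distrib, ← pow_mul, add_pow_char_pow, mul_add]

variable [PerfectRing L 2]

theorem adjIcc_mul_of_pow_eq {t : L} (ht : t ^ 2 ^ k = t) (h : L) :
    adjIcc k e c (t * h) = t * adjIcc k e c h := by
  simp only [adjIcc, mul_sum, mul_left_comm _ t, rt_mul, rt_mul_eq_self_of_pow_eq k _ ht]

theorem map_adjIcc {L' : Type*} [Field L'] [CharP L' 2] [PerfectRing L' 2] (φ : L →+* L')
    (x : L) : φ (adjIcc k e c x) = adjIcc k e (fun i => φ (c i)) (φ x) := by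
  simp [adjIcc, map_rt]

theorem eval_lpolyAddAdjPowPoly (x : L) :
    (lpolyAddAdjPowPoly k e c).eval x
      = (LpolyIcc (2 ^ k) e c x + adjIcc k e c x) ^ 2 ^ (k * e) := by
  simp only [lpolyAddAdjPowPoly, LpolyIcc, adjIcc, eval_finsetSum, ← sum_add_distrib,
    sum_pow_char_pow, add_pow_char_pow]
  refine sum_congr rfl fun i hi => ?_
  have hsplit : k * e = k * i + k * (e - i) := by
    rw [← Nat.mul_add, Nat.add_sub_cancel' (mem_Icc.1 hi).2]
  simp only [eval_add, eval_mul, eval_C, eval_pow, eval_X]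
  rw [mul_pow, ← pow_mul, ← pow_mul, ← pow_add]
  congr 1
  · rw [← Nat.mul_add, add_comm i]
  · rw [hsplit, pow_add, pow_mul (rt L (k * i) (c i * x)), rt_pow, mul_pow]

end LinearisedPolynomial

section TraceCharacter

variable {K : Type*} [Field K] {n : ℕ}

theorem tr2_add [CharP K 2] (x y : K) : tr2 n (x + y) = tr2 n x + tr2 n y := by
  simp only [tr2, ← sum_add_distrib, add_pow_char_pow]

theorem tr2_sq [Fintype K] (hcard : Fintype.card K = 2 ^ n) (x : K) :
    tr2 n (x ^ 2) = tr2 n x := by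
  have hx : x ^ 2 ^ n = x := by rw [← hcard, FiniteField.pow_card]
  have h := sum_range_succ (fun i => x ^ 2 ^ i) n
  rw [sum_range_succ', hx, pow_zero, pow_one] at h
  simpa only [tr2, ← pow_mul, ← pow_succ'] using add_right_cancel h

variable [Fintype K]

/-- `tr2 n` is a polynomial map of degree `2^(n-1) < q`, so it does not vanish on `K`. -/
theorem exists_tr2_ne_zero (hcard : Fintype.card K = 2 ^ n) : ∃ w : K, tr2 n w ≠ 0 := by
  have hn : n ≠ 0 := by
    rintro rfl
    exact Fintype.one_lt_card.ne' (by simpa using hcard)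
  by_contra! h
  let P : Polynomial K := ∑ i ∈ range n, Polynomial.X ^ 2 ^ i
  have hlead : P.coeff (2 ^ (n - 1)) = 1 := by
    simp [P, Polynomial.finsetSum_coeff, Polynomial.coeff_X_pow, hn]
  have hdeg : P.natDegree < Fintype.card K := by
    refine (Polynomial.natDegree_sum_le_of_forall_le (n := 2 ^ (n - 1)) _ _
      fun i hi => ?_).trans_lt ?_
    · rw [Polynomial.natDegree_X_pow]
      exact Nat.pow_le_pow_right two_pos (by simp at hi; omega)
    · rw [hcard]; exact Nat.pow_lt_pow_right one_lt_two (by omega)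
  have hP : P = 0 := Polynomial.eq_zero_of_natDegree_lt_card_of_eval_eq_zero P
    Function.injective_id (fun x => by simpa [P, Polynomial.eval_finsetSum, tr2] using h x) hdeg
  simp [hP] at hlead

variable [CharP K 2]

theorem tr2_eq_zero_or_eq_one (hcard : Fintype.card K = 2 ^ n) (x : K) :
    tr2 n x = 0 ∨ tr2 n x = 1 := by
  have h : tr2 n x ^ 2 = tr2 n x := calc
    tr2 n x ^ 2 = tr2 n (x ^ 2) := by simp only [tr2, sum_pow_char, ← pow_mul, mul_comm]
    _ = tr2 n x := tr2_sq hcard x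
  have : tr2 n x * (tr2 n x - 1) = 0 := by linear_combination h
  rcases mul_eq_zero.1 this with h0 | h1
  · exact Or.inl h0
  · exact Or.inr (sub_eq_zero.1 h1)

variable (hcard : Fintype.card K = 2 ^ n)

/-- The character `psiq`, with values in `ℤ`. -/
def traceChar : AddChar K ℤ where
  toFun x := if tr2 n x = 0 then 1 else -1
  map_zero_eq_one' := by simp [tr2]
  map_add_eq_mul' x y := by
    rw [tr2_add]
    rcases tr2_eq_zero_or_eq_one hcard x with hx | hx <;>
      rcases tr2_eq_zero_or_eq_one hcard y with hy | hy <;>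
        simp [hx, hy, CharTwo.add_self_eq_zero]

theorem traceChar_le_one (x : K) : traceChar hcard x ≤ 1 := by
  simp only [traceChar, AddChar.coe_mk]; split_ifs <;> norm_num

theorem traceChar_mul_self (x : K) : traceChar hcard x * traceChar hcard x = 1 := by
  rw [← AddChar.map_add_eq_mul, CharTwo.add_self_eq_zero, AddChar.map_zero_eq_one]

theorem traceChar_sq (x : K) : traceChar hcard (x ^ 2) = traceChar hcard x := by
  simp only [traceChar, AddChar.coe_mk, tr2_sq hcard]

theorem traceChar_pow_two_pow (j : ℕ) (x : K) :
    traceChar hcard (x ^ 2 ^ j) = traceChar hcard x := by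
  induction j with
  | zero => simp
  | succ j ih => rw [pow_succ, pow_mul, traceChar_sq, ih]

theorem traceChar_rt (j : ℕ) (x : K) : traceChar hcard (rt K j x) = traceChar hcard x := by
  rw [← traceChar_pow_two_pow hcard j, rt_pow]

theorem sum_traceChar_mul (b : K) :
    ∑ x : K, traceChar hcard (x * b) = if b = 0 then (2 : ℤ) ^ n else 0 := by
  have hψ : traceChar hcard ≠ 1 := by
    obtain ⟨w, hw⟩ := exists_tr2_ne_zero hcard
    rw [AddChar.ne_one_iff]
    exact ⟨w, by simp [traceChar, hw]⟩
  rw [AddChar.sum_mulShift b (AddChar.IsPrimitive.of_ne_one hψ), hcard]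
  push_cast; rfl

end TraceCharacter

section CharacterSums

variable {K : Type*} [Field K] [Fintype K] [CharP K 2] {n : ℕ} (hcard : Fintype.card K = 2 ^ n)

/-- Frobenius invariance of `ψ` gives `ψ(t y^p) = ψ(t^(1/p) y)`, so the sum is that of
the linear character `y ↦ ψ((t^(1/p) + t) y)`. -/
theorem sum_traceChar_artinSchreier (k : ℕ) (t : K) :
    ∑ y : K, traceChar hcard (t * (y ^ 2 ^ k + y)) = if t ^ 2 ^ k = t then 2 ^ n else 0 := by
  have hterm : ∀ y : K, traceChar hcard (t * (y ^ 2 ^ k + y))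
      = traceChar hcard (y * (rt K k t + t)) := fun y => by
    rw [mul_add, AddChar.map_add_eq_mul, ← traceChar_rt hcard k, rt_mul_pow, mul_add,
      AddChar.map_add_eq_mul, mul_comm y, mul_comm y]
  simp only [hterm, sum_traceChar_mul, CharTwo.add_eq_zero, rt_eq_self_iff]

theorem ncount_eq_sum_traceChar (k : ℕ) (R : K → K) :
    (Ncount K (2 ^ k) R : ℤ) = ∑ t ∈ univ.filter (fun t : K => t ^ 2 ^ k = t),
      ∑ x : K, traceChar hcard (t * (x * R x)) := by
  have hN : (Ncount K (2 ^ k) R : ℤ)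
      = ∑ x : K, ∑ y : K, if y ^ 2 ^ k + y + x * R x = 0 then 1 else 0 := by
    simp only [Ncount, Nat.card_eq_fintype_card, Fintype.card_subtype, card_filter,
      Fintype.sum_prod_type, CharTwo.sub_eq_add, CharTwo.add_eq_zero]
    push_cast; rfl
  have hq : (2 : ℤ) ^ n ≠ 0 := by positivity
  refine mul_left_cancel₀ hq ?_
  have hsplit : ∀ t x y : K, traceChar hcard (t * (y ^ 2 ^ k + y + x * R x))
      = traceChar hcard (t * (y ^ 2 ^ k + y)) * traceChar hcard (t * (x * R x)) := fun t x y => by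
    rw [mul_add, AddChar.map_add_eq_mul]
  calc (2 : ℤ) ^ n * Ncount K (2 ^ k) R
      = ∑ x : K, ∑ y : K, ∑ t : K, traceChar hcard (t * (y ^ 2 ^ k + y + x * R x)) := by
        rw [hN, mul_sum]
        refine sum_congr rfl fun x _ => ?_
        rw [mul_sum]
        refine sum_congr rfl fun y _ => ?_
        rw [sum_traceChar_mul]
        split_ifs <;> simp
    _ = ∑ t : K, (∑ y : K, traceChar hcard (t * (y ^ 2 ^ k + y))) *
          ∑ x : K, traceChar hcard (t * (x * R x)) := by
        simp only [hsplit, sum_mul_sum]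
        rw [sum_comm]
        exact (sum_congr rfl fun y _ => sum_comm).trans sum_comm
    _ = 2 ^ n * ∑ t ∈ univ.filter (fun t : K => t ^ 2 ^ k = t),
          ∑ x : K, traceChar hcard (t * (x * R x)) := by
        rw [mul_sum, sum_filter]
        refine sum_congr rfl fun t _ => ?_
        rw [sum_traceChar_artinSchreier]
        split_ifs <;> simp

/-- Squaring the character sum of the quadratic form `x L(x)`: after the shift `y = x + h` the
cross terms `x L(h) + h L(x)` are linear in `x`, so summing over `x` picks out `ker(L + L')`. -/
theorem sq_sum_traceChar_quadratic (L : K →+ K) (L' : K → K)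
    (hadj : ∀ x h, traceChar hcard (h * L x) = traceChar hcard (x * L' h)) :
    (∑ x : K, traceChar hcard (x * L x)) ^ 2
      = 2 ^ n * ∑ h ∈ univ.filter (fun h => L h + L' h = 0), traceChar hcard (h * L h) := by
  have hshift : ∀ x h : K, traceChar hcard (x * L x) * traceChar hcard ((x + h) * L (x + h))
      = traceChar hcard (h * L h) * traceChar hcard (x * (L h + L' h)) := fun x h => by
    rw [map_add, show (x + h) * (L x + L h) = x * L x + (h * L h + x * L h + h * L x) by ring]
    simp only [AddChar.map_add_eq_mul, hadj x h, mul_add]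
    linear_combination (traceChar hcard (h * L h) * traceChar hcard (x * L h) *
      traceChar hcard (x * L' h)) * traceChar_mul_self hcard (x * L x)
  calc (∑ x : K, traceChar hcard (x * L x)) ^ 2
      = ∑ x : K, ∑ h : K,
          traceChar hcard (x * L x) * traceChar hcard ((x + h) * L (x + h)) := by
        rw [sq, sum_mul_sum]
        exact sum_congr rfl fun x _ =>
          (Fintype.sum_equiv (Equiv.addLeft x) _ _ fun h => rfl).symm
    _ = ∑ h : K, traceChar hcard (h * L h) * ∑ x : K, traceChar hcard (x * (L h + L' h)) := by
        simp only [hshift, mul_sum]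
        exact sum_comm
    _ = 2 ^ n * ∑ h ∈ univ.filter (fun h => L h + L' h = 0), traceChar hcard (h * L h) := by
        rw [mul_sum, sum_filter]
        refine sum_congr rfl fun h _ => ?_
        rw [sum_traceChar_mul]
        split_ifs <;> ring

theorem sq_sum_traceChar_quadratic_le (L : K →+ K) (L' : K → K)
    (hadj : ∀ x h, traceChar hcard (h * L x) = traceChar hcard (x * L' h)) :
    (∑ x : K, traceChar hcard (x * L x)) ^ 2
      ≤ 2 ^ n * #(univ.filter (fun h => L h + L' h = 0)) := by
  rw [sq_sum_traceChar_quadratic hcard L L' hadj, card_eq_sum_ones, Nat.cast_sum, Nat.cast_one]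
  gcongr with h
  exact traceChar_le_one hcard _

theorem traceChar_mul_LpolyIcc (k e : ℕ) (c : ℕ → K) (x h : K) :
    traceChar hcard (h * LpolyIcc (2 ^ k) e c x) = traceChar hcard (x * adjIcc k e c h) := by
  simp only [LpolyIcc, adjIcc, mul_sum, AddChar.map_sum_eq_prod]
  refine prod_congr rfl fun i _ => ?_
  rw [← traceChar_rt hcard (k * i), ← mul_assoc, ← pow_mul, rt_mul_pow, mul_comm h,
    mul_comm x]

theorem sq_sum_traceChar_twist_le (k e : ℕ) (c : ℕ → K) (a : K) {t : K} (ht : t ^ 2 ^ k = t)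
    (ht0 : t ≠ 0) :
    (∑ x : K, traceChar hcard (t * (x * (LpolyIcc (2 ^ k) e c x + a * x)))) ^ 2
      ≤ 2 ^ n * #(univ.filter fun h : K => LpolyIcc (2 ^ k) e c h + adjIcc k e c h = 0) := by
  let L : K →+ K := AddMonoidHom.mk' (fun x => t * (LpolyIcc (2 ^ k) e c x + a * x))
    fun x y => by simp only [LpolyIcc_add]; ring
  have hadj : ∀ x h, traceChar hcard (h * L x)
      = traceChar hcard (x * (adjIcc k e c (t * h) + t * a * h)) := fun x h => by
    simp only [L, AddMonoidHom.mk'_apply, mul_add, AddChar.map_add_eq_mul,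
      ← traceChar_mul_LpolyIcc hcard]
    ring_nf
  have hker : ∀ h, L h + (adjIcc k e c (t * h) + t * a * h) = 0
      ↔ LpolyIcc (2 ^ k) e c h + adjIcc k e c h = 0 := fun h => by
    have hfactor : L h + (adjIcc k e c (t * h) + t * a * h)
        = t * (LpolyIcc (2 ^ k) e c h + adjIcc k e c h) := by
      simp only [L, AddMonoidHom.mk'_apply, adjIcc_mul_of_pow_eq k e c ht]
      linear_combination (t * a * h) * CharTwo.two_eq_zero (R := K)
    rw [hfactor, mul_eq_zero, or_iff_right ht0]
  have hbound := sq_sum_traceChar_quadratic_le hcard L _ hadj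
  simp only [hker] at hbound
  convert hbound using 4 with x
  simp only [L, AddMonoidHom.mk'_apply]
  ring

end CharacterSums

theorem card_ker_ge_of_extremal {K : Type*} [Field K] [Fintype K] [CharP K 2] {n : ℕ}
    (hcard : Fintype.card K = 2 ^ n) (k e : ℕ) (hk : 1 ≤ k) (c : ℕ → K) (a : K)
    (ha : ((Ncount K (2 ^ k) (fun x => LpolyIcc (2 ^ k) e c x + a * x) : ℤ) - 2 ^ n) ^ 2
      = (2 ^ k - 1) ^ 2 * (2 ^ k) ^ (2 * e) * 2 ^ n) :
    (2 ^ k) ^ (2 * e)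
      ≤ #(univ.filter fun h : K => LpolyIcc (2 ^ k) e c h + adjIcc k e c h = 0) := by
  set W := univ.filter fun h : K => LpolyIcc (2 ^ k) e c h + adjIcc k e c h = 0
  set P := univ.filter fun t : K => t ^ 2 ^ k = t
  set S : K → ℤ := fun t =>
    ∑ x : K, traceChar hcard (t * (x * (LpolyIcc (2 ^ k) e c x + a * x)))
  have hS0 : S 0 = 2 ^ n := by simp [S, hcard]
  have hcount : (Ncount K (2 ^ k) (fun x => LpolyIcc (2 ^ k) e c x + a * x) : ℤ) - 2 ^ n
      = ∑ t ∈ P.erase 0, S t := by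
    rw [ncount_eq_sum_traceChar hcard, ← add_sum_erase P S (a := 0) (by simp [P]), hS0,
      add_sub_cancel_left]
  have hp : (0 : ℤ) < 2 ^ k - 1 := by
    linarith [show (2 : ℤ) ≤ 2 ^ k by exact_mod_cast Nat.le_self_pow (by omega) 2]
  have hP : (#(P.erase 0) : ℤ) ≤ 2 ^ k - 1 := by
    have hPp : #P ≤ 2 ^ k :=
      card_filter_pow_eq_self_le (Nat.one_lt_two_pow_iff.2 (by omega))
    rw [card_erase_of_mem (by simp [P]), Nat.cast_sub (card_pos.2 ⟨0, by simp [P]⟩)]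
    push_cast
    linarith [(Nat.cast_le (α := ℤ)).2 hPp]
  have hsum : ∑ t ∈ P.erase 0, S t ^ 2 ≤ #(P.erase 0) * (2 ^ n * #W) := by
    rw [← nsmul_eq_mul, ← sum_const]
    refine sum_le_sum fun t ht => ?_
    obtain ⟨ht0, htP⟩ := mem_erase.1 ht
    exact sq_sum_traceChar_twist_le hcard k e c a (mem_filter.1 htP).2 ht0
  have key : (2 ^ k - 1) ^ 2 * 2 ^ n * (2 ^ k) ^ (2 * e) ≤ (2 ^ k - 1) ^ 2 * 2 ^ n * (#W : ℤ) :=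
    calc (2 ^ k - 1) ^ 2 * 2 ^ n * (2 ^ k) ^ (2 * e)
        = (∑ t ∈ P.erase 0, S t) ^ 2 := by rw [← hcount, ha]; ring
      _ ≤ #(P.erase 0) * ∑ t ∈ P.erase 0, S t ^ 2 := sq_sum_le_card_mul_sum_sq
      _ ≤ #(P.erase 0) * (#(P.erase 0) * (2 ^ n * #W)) := by gcongr
      _ ≤ (2 ^ k - 1) * ((2 ^ k - 1) * (2 ^ n * #W)) := by gcongr
      _ = (2 ^ k - 1) ^ 2 * 2 ^ n * #W := by ring
  exact_mod_cast le_of_mul_le_mul_left key (by positivity)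

theorem statement4_general {K : Type*} [Field K] [Fintype K] [CharP K 2]
    (k m e : ℕ) (hk : 1 ≤ k) (he : 1 ≤ e)
    (hcard : Fintype.card K = 2 ^ (k * m))
    (c : ℕ → K) (hce : c e ≠ 0)
    (hex : ∃ a : K,
      ((Ncount K (2 ^ k) (fun x => LpolyIcc (2 ^ k) e c x + a * x) : ℤ) - 2 ^ (k * m)) ^ 2
        = (2 ^ k - 1) ^ 2 * (2 ^ k) ^ (2 * e) * 2 ^ (k * m)) :
    ∀ u : AlgebraicClosure K,
      LpolyIcc (2 ^ k) e (fun i => algebraMap K (AlgebraicClosure K) (c i)) u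
          + adjIcc k e (fun i => algebraMap K (AlgebraicClosure K) (c i)) u = 0 →
        u ∈ Set.range (algebraMap K (AlgebraicClosure K)) := by
  intro u hu
  obtain ⟨a, ha⟩ := hex
  set φ := algebraMap K (AlgebraicClosure K)
  set W := univ.filter fun h : K => LpolyIcc (2 ^ k) e c h + adjIcc k e c h = 0
  set P := lpolyAddAdjPowPoly k e fun i => φ (c i)
  have hP : P ≠ 0 := fun h0 => hce <| by
    simpa [P, h0] using (coeff_lpolyAddAdjPowPoly k e (fun i => φ (c i)) hk he).symm
  have hroot : ∀ v, LpolyIcc (2 ^ k) e (fun i => φ (c i)) v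
      + adjIcc k e (fun i => φ (c i)) v = 0 → P.IsRoot v := fun v hv => by
    simp [Polynomial.IsRoot, P, eval_lpolyAddAdjPowPoly, hv]
  have hWroot : ∀ v ∈ W.image φ, P.IsRoot v := fun v hv => by
    obtain ⟨w, hw, rfl⟩ := mem_image.1 hv
    refine hroot _ ?_
    rw [← map_LpolyIcc, ← map_adjIcc, ← map_add, (mem_filter.1 hw).2, map_zero]
  have hdeg : P.natDegree ≤ #(W.image φ) := by
    rw [card_image_of_injective W φ.injective]
    refine (natDegree_lpolyAddAdjPowPoly_le k e _).trans ?_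
    rw [pow_mul]
    exact card_ker_ge_of_extremal hcard k e hk c a ha
  obtain ⟨w, -, rfl⟩ :=
    mem_image.1 (Polynomial.mem_of_isRoot_of_natDegree_le_card hP hWroot hdeg (hroot u hu))
  exact ⟨w, rfl⟩

/-- If some twist `y^p - y = x(R(x) + ax)` is `𝔽_q`-extremal, then
`V = ker(R + R^*) ⊆ 𝔽_q`. -/
theorem statement4 {K : Type*} [Field K] [Fintype K] [CharP K 2]
    (k m e : ℕ) (hk : 1 ≤ k) (hm : 1 ≤ m) (he : 1 ≤ e)
    (hcard : Fintype.card K = 2 ^ (k * m))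
    (c : ℕ → K) (hce : c e ≠ 0)
    (hex : ∃ a : K,
      ((Ncount K (2 ^ k) (fun x => LpolyIcc (2 ^ k) e c x + a * x) : ℤ) - 2 ^ (k * m)) ^ 2
        = (2 ^ k - 1) ^ 2 * (2 ^ k) ^ (2 * e) * 2 ^ (k * m)) :
    ∀ u : AlgebraicClosure K,
      LpolyIcc (2 ^ k) e (fun i => algebraMap K (AlgebraicClosure K) (c i)) u
          + adjIcc k e (fun i => algebraMap K (AlgebraicClosure K) (c i)) u = 0 →
        u ∈ Set.range (algebraMap K (AlgebraicClosure K)) :=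
  statement4_general k m e hk he hcard c hce hex

end
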